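/- arXiv:2106.11130 — 2 statements merged into one kernel-verified Lean document; each statement's English description precedes it below -/
import Mathlib

section
/- With g(α,s) as above and ĝ(α,s) = ∂_s g(α,s)/∂_s g(α,1), we have ∂_s g(α,1) = f'(f^{-1}(1-α))²/((1-α) f'(1)) and ∂_s ĝ(α,1) evaluated at α gives ∂_s ĝ(α,1) = f''(f^{-1}(1-α))/f'(1). In particular, ∂_s ĝ(α_c, 1) = 1 where α_c is the smallest positive solution of f''(f^{-1}(1-α))/f'(1) = 1. -/
/-!
With `a = f⁻¹(1 - α)`, `s ↦ g(α, s)` is `f` composed with an affine map of slope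
`m = f'(a) / f'(1)` taking `1` to `a`, scaled by `1 / (1 - α)`. Hence `∂_s g(α, 1) = m f'(a) / (1 - α)`
and `∂_s² g(α, 1) = m² f''(a) / (1 - α)`, whose quotient is `f''(a) / f'(1)` as soon as
`f'(a) ≠ 0`. That last fact is the only non-formal input: `f` is convex on `[0, 1]` as a power
series with nonnegative coefficients, and `f a = 1 - α > f 0`, so `f'(a)` dominates a positive slope.
-/

open Set

lemma convexOn_Icc_tsum_mul_pow {π : ℕ → ℝ} (hπ : ∀ i, 0 ≤ π i) (hsum : Summable π) :
    ConvexOn ℝ (Icc 0 1) (fun s => ∑' i, π i * s ^ i) := by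
  have hsummable : ∀ t ∈ Icc (0 : ℝ) 1, Summable (fun i => π i * t ^ i) := fun t ht =>
    hsum.of_nonneg_of_le (fun i => mul_nonneg (hπ i) (pow_nonneg ht.1 i))
      (fun i => mul_le_of_le_one_right (hπ i) (pow_le_one₀ ht.1 ht.2))
  refine ⟨convex_Icc 0 1, fun x hx y hy a b ha hb hab => ?_⟩
  have hxy := convex_Icc (0 : ℝ) 1 hx hy ha hb hab
  simp only [smul_eq_mul] at hxy ⊢
  rw [← tsum_mul_left, ← tsum_mul_left,
    ← ((hsummable x hx).mul_left a).tsum_add ((hsummable y hy).mul_left b)]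
  refine (hsummable _ hxy).tsum_le_tsum (fun i => ?_)
    (((hsummable x hx).mul_left a).add ((hsummable y hy).mul_left b))
  have hpow := (convexOn_pow i).2 (mem_Ici.2 hx.1) (mem_Ici.2 hy.1) ha hb hab
  simp only [smul_eq_mul] at hpow
  nlinarith [mul_le_mul_of_nonneg_left hpow (hπ i)]

lemma ConvexOn.deriv_pos_of_lt {S : Set ℝ} {f : ℝ → ℝ} {x y : ℝ} (hfc : ConvexOn ℝ S f)
    (hx : x ∈ S) (hy : y ∈ S) (hxy : x < y) (hf : f x < f y) (hfd : DifferentiableAt ℝ f y) :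
    0 < deriv f y :=
  ((slope_pos_iff_of_le hxy.le).mpr hf).trans_le (hfc.slope_le_deriv hx hy hxy hfd)

section Rescaling

variable {f : ℝ → ℝ} (c a b d : ℝ)

lemma hasDerivAt_const_mul_comp_affine (hf : Differentiable ℝ f) (s : ℝ) :
    HasDerivAt (fun s => c * f (a - (1 - s) * b / d))
      (c * (b / d) * deriv f (a - (1 - s) * b / d)) s := by
  have hinner : HasDerivAt (fun s => a - (1 - s) * b / d) (b / d) s :=
    ((((hasDerivAt_id s).const_sub 1).mul_const b).div_const d).const_sub a
      |>.congr_deriv (by ring)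
  exact (((hf _).hasDerivAt.comp s hinner).const_mul c).congr_deriv (by ring)

lemma deriv_const_mul_comp_affine (hf : Differentiable ℝ f) :
    deriv (fun s => c * f (a - (1 - s) * b / d)) =
      fun s => c * (b / d) * deriv f (a - (1 - s) * b / d) :=
  funext fun s => (hasDerivAt_const_mul_comp_affine c a b d hf s).deriv

lemma deriv_const_mul_comp_affine_one (hf : Differentiable ℝ f) :
    deriv (fun s => c * f (a - (1 - s) * deriv f a / d)) 1 = c * deriv f a ^ 2 / d := by
  rw [deriv_const_mul_comp_affine _ _ _ _ hf]
  simp only [sub_self, zero_mul, zero_div, sub_zero]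
  ring

lemma deriv_normalized_deriv_const_mul_comp_affine_one (hf : Differentiable ℝ f)
    (hf' : Differentiable ℝ (deriv f)) (hc : c ≠ 0) (hfa : deriv f a ≠ 0) :
    deriv (fun s => deriv (fun s => c * f (a - (1 - s) * deriv f a / d)) s /
        deriv (fun s => c * f (a - (1 - s) * deriv f a / d)) 1) 1 =
      deriv (deriv f) a / d := by
  rw [deriv_div_const, deriv_const_mul_comp_affine_one _ _ _ hf,
    deriv_const_mul_comp_affine _ _ _ _ hf, deriv_const_mul_comp_affine _ _ _ _ hf']
  simp only [sub_self, zero_mul, zero_div, sub_zero]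
  field_simp

end Rescaling

lemma deriv_finv_pos_of_convexOn {f finv : ℝ → ℝ} (hconv : ConvexOn ℝ (Icc 0 1) f)
    (hfd : Differentiable ℝ f) (hinv : ∀ y ∈ Icc (f 0) 1, finv y ∈ Icc (0 : ℝ) 1 ∧ f (finv y) = y)
    {y : ℝ} (hy0 : f 0 < y) (hy1 : y ≤ 1) : 0 < deriv f (finv y) := by
  obtain ⟨hmem, hfinv⟩ := hinv y ⟨hy0.le, hy1⟩
  have hlt : f 0 < f (finv y) := by rw [hfinv]; exact hy0
  have hpos : 0 < finv y := hmem.1.lt_of_ne (by rintro h; rw [← h] at hlt; exact hlt.false)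
  exact hconv.deriv_pos_of_lt ⟨le_rfl, zero_le_one⟩ hmem hpos hlt (hfd _)

theorem stmt11_general (π : ℕ → ℝ) (hπ : ∀ i, 0 ≤ π i) (hπ1 : HasSum π 1)
    (f finv : ℝ → ℝ) (g gh : ℝ → ℝ → ℝ) (αc : ℝ)
    (hf : ∀ s ∈ Set.Icc (0 : ℝ) 1, f s = ∑' i : ℕ, π i * s ^ i)
    (hreg : ContDiff ℝ 2 f)
    (hinv : ∀ y ∈ Set.Icc (f 0) 1, finv y ∈ Set.Icc (0 : ℝ) 1 ∧ f (finv y) = y)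
    (hαc : 0 < αc ∧ αc < 1 - f 0)
    (hg : ∀ α : ℝ, ∀ s : ℝ,
      g α s = (1 / (1 - α)) *
        f (finv (1 - α) - (1 - s) * deriv f (finv (1 - α)) / deriv f 1))
    (hgh : ∀ α : ℝ, ∀ s : ℝ, gh α s = deriv (g α) s / deriv (g α) 1)
    (hαcroot : iteratedDeriv 2 f (finv (1 - αc)) / deriv f 1 = 1) :
    (∀ α ∈ Set.Icc (0 : ℝ) αc,
      deriv (g α) 1 = (deriv f (finv (1 - α))) ^ 2 / ((1 - α) * deriv f 1)) ∧
    (∀ α ∈ Set.Icc (0 : ℝ) αc,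
      deriv (gh α) 1 = iteratedDeriv 2 f (finv (1 - α)) / deriv f 1) ∧
    deriv (gh αc) 1 = 1 := by
  have hfd : Differentiable ℝ f := hreg.differentiable (by norm_num)
  have hconv : ConvexOn ℝ (Icc 0 1) f :=
    (convexOn_Icc_tsum_mul_pow hπ hπ1.summable).congr fun s hs => (hf s hs).symm
  have hf0 : 0 ≤ f 0 := by
    rw [hf 0 ⟨le_rfl, zero_le_one⟩]
    exact tsum_nonneg fun i => mul_nonneg (hπ i) (pow_nonneg le_rfl i)
  have key : ∀ α ∈ Icc 0 αc,
      deriv (g α) 1 = (deriv f (finv (1 - α))) ^ 2 / ((1 - α) * deriv f 1) ∧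
      deriv (gh α) 1 = iteratedDeriv 2 f (finv (1 - α)) / deriv f 1 := by
    rintro α ⟨hα0, hααc⟩
    have hgα : g α = fun s =>
        1 / (1 - α) * f (finv (1 - α) - (1 - s) * deriv f (finv (1 - α)) / deriv f 1) :=
      funext (hg α)
    have hb := deriv_finv_pos_of_convexOn hconv hfd hinv (y := 1 - α) (by linarith) (by linarith)
    refine ⟨?_, ?_⟩
    · rw [hgα, deriv_const_mul_comp_affine_one _ _ _ hfd, div_mul_eq_div_div_swap]
      ring
    · rw [show gh α = _ from funext (hgh α), hgα, iteratedDeriv_succ, iteratedDeriv_one,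
        deriv_normalized_deriv_const_mul_comp_affine_one _ _ _ hfd hreg.differentiable_deriv_two
          (one_div_ne_zero (by linarith)) hb.ne']
  exact ⟨fun α hα => (key α hα).1, fun α hα => (key α hα).2,
    by rw [(key αc ⟨hαc.1.le, le_rfl⟩).2, hαcroot]⟩

/-- With g(α,s) = (1/(1-α))·f(f⁻¹(1-α) - (1-s)f'(f⁻¹(1-α))/f'(1)) and
ĝ(α,s) = ∂_s g(α,s)/∂_s g(α,1), one has ∂_s g(α,1) = f'(f⁻¹(1-α))²/((1-α)f'(1)),
∂_s ĝ(α,1) = f''(f⁻¹(1-α))/f'(1), and in particular ∂_s ĝ(α_c,1) = 1 where α_c is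
the smallest positive solution of f''(f⁻¹(1-α))/f'(1) = 1. -/
theorem stmt11 (π : ℕ → ℝ) (hπ : ∀ i, 0 ≤ π i) (hπ1 : HasSum π 1)
    (hmom2 : Summable (fun i : ℕ => (i : ℝ) ^ 2 * π i)) (h0 : π 0 < 1)
    (f finv : ℝ → ℝ) (g gh : ℝ → ℝ → ℝ) (αc : ℝ)
    (hf : ∀ s ∈ Set.Icc (0 : ℝ) 1, f s = ∑' i : ℕ, π i * s ^ i)
    (hreg : ContDiff ℝ 2 f)
    (hmono : StrictMonoOn f (Set.Icc (0 : ℝ) 1))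
    (hinv : ∀ y ∈ Set.Icc (f 0) 1, finv y ∈ Set.Icc (0 : ℝ) 1 ∧ f (finv y) = y)
    (hαc : 0 < αc ∧ αc < 1 - f 0)
    (hsuper : deriv f 1 < iteratedDeriv 2 f 1)
    (hg : ∀ α : ℝ, ∀ s : ℝ,
      g α s = (1 / (1 - α)) *
        f (finv (1 - α) - (1 - s) * deriv f (finv (1 - α)) / deriv f 1))
    (hgh : ∀ α : ℝ, ∀ s : ℝ, gh α s = deriv (g α) s / deriv (g α) 1)
    (hαcroot : iteratedDeriv 2 f (finv (1 - αc)) / deriv f 1 = 1)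
    (hαcmin : ∀ α : ℝ, 0 < α → iteratedDeriv 2 f (finv (1 - α)) / deriv f 1 = 1 → αc ≤ α) :
    (∀ α ∈ Set.Icc (0 : ℝ) αc,
      deriv (g α) 1 = (deriv f (finv (1 - α))) ^ 2 / ((1 - α) * deriv f 1)) ∧
    (∀ α ∈ Set.Icc (0 : ℝ) αc,
      deriv (gh α) 1 = iteratedDeriv 2 f (finv (1 - α)) / deriv f 1) ∧
    deriv (gh αc) 1 = 1 :=
  stmt11_general π hπ hπ1 f finv g gh αc hf hreg hinv hαc hg hgh hαcroot
end

section
/- Suppose π is supercritical with finite second moment, and for each α ∈ [0, α_c) the function s ↦ ĝ(α, s) (as defined from g(α,·)) satisfies ∂_s ĝ(α, 1) > 1. Then for each α ∈ [0, α_c) the equation 1 - ρ = ĝ(α, 1 - ρ) has a unique solution ρ(α) ∈ (0, 1], and the map α ↦ ρ(α) is well-defined and continuous on [0, α_c). -/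
open Set

private lemma stmt12_summ {p : ℕ → ℝ} (hp0 : ∀ i, 0 ≤ p i) (hps : Summable p)
    {t : ℝ} (ht : t ∈ Icc (0:ℝ) 1) : Summable (fun i => p i * t ^ i) := by
  refine Summable.of_nonneg_of_le (fun i => mul_nonneg (hp0 i) (pow_nonneg ht.1 i))
    (fun i => ?_) hps
  have : t ^ i ≤ 1 := pow_le_one₀ ht.1 ht.2
  nlinarith [hp0 i]

private lemma stmt12_convex {p : ℕ → ℝ} (hp0 : ∀ i, 0 ≤ p i) (hps : Summable p)
    {x y a b : ℝ} (hx : x ∈ Icc (0:ℝ) 1) (hy : y ∈ Icc (0:ℝ) 1)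
    (ha : 0 ≤ a) (hb : 0 ≤ b) (hab : a + b = 1) :
    (∑' i, p i * (a*x+b*y) ^ i) ≤ a * (∑' i, p i * x ^ i) + b * (∑' i, p i * y ^ i) := by
  have hxy : a*x+b*y ∈ Icc (0:ℝ) 1 := by
    constructor
    · exact add_nonneg (mul_nonneg ha hx.1) (mul_nonneg hb hy.1)
    · nlinarith [mul_le_mul_of_nonneg_left hx.2 ha, mul_le_mul_of_nonneg_left hy.2 hb]
  have h1 := stmt12_summ hp0 hps hx
  have h2 := stmt12_summ hp0 hps hy
  have h3 := stmt12_summ hp0 hps hxy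
  calc (∑' i, p i * (a*x+b*y) ^ i)
      ≤ ∑' i, (a * (p i * x^i) + b * (p i * y^i)) := by
        refine Summable.tsum_le_tsum (fun i => ?_) h3 ((h1.mul_left a).add (h2.mul_left b))
        have hcx := (convexOn_pow i).2 (mem_Ici.2 hx.1) (mem_Ici.2 hy.1) ha hb hab
        simp only [smul_eq_mul] at hcx
        nlinarith [hp0 i, mul_le_mul_of_nonneg_left hcx (hp0 i)]
    _ = a * (∑' i, p i * x ^ i) + b * (∑' i, p i * y ^ i) := by
        rw [Summable.tsum_add (h1.mul_left a) (h2.mul_left b), tsum_mul_left, tsum_mul_left]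

/-- If for each α ∈ [0,α_c) the function s ↦ ĝ(α,s) is a probability
generating function with ∂_s ĝ(α,1) > 1, then the equation 1 - ρ = ĝ(α,1-ρ) has a
unique solution ρ(α) ∈ (0,1], and α ↦ ρ(α) is well-defined and continuous on [0,α_c). -/
theorem stmt12 (αc : ℝ) (hαc : 0 < αc) (gh : ℝ → ℝ → ℝ)
    (hpgf : ∀ α ∈ Set.Ico (0 : ℝ) αc, ∃ p : ℕ → ℝ,
      (∀ i, 0 ≤ p i) ∧ HasSum p 1 ∧
      ∀ s ∈ Set.Icc (0 : ℝ) 1, gh α s = ∑' i : ℕ, p i * s ^ i)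
    (hcont : ContinuousOn (fun q : ℝ × ℝ => gh q.1 q.2)
      (Set.Ico (0 : ℝ) αc ×ˢ Set.Icc (0 : ℝ) 1))
    (hd : ∀ α ∈ Set.Ico (0 : ℝ) αc, 1 < deriv (gh α) 1) :
    ∃ ρ : ℝ → ℝ, ContinuousOn ρ (Set.Ico (0 : ℝ) αc) ∧
      ∀ α ∈ Set.Ico (0 : ℝ) αc,
        ρ α ∈ Set.Ioc (0 : ℝ) 1 ∧ 1 - ρ α = gh α (1 - ρ α) ∧
        ∀ r ∈ Set.Ioc (0 : ℝ) 1, 1 - r = gh α (1 - r) → r = ρ α := by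
  set S := Set.Ico (0:ℝ) αc with hSdef
  -- continuity in s for fixed α
  have hcont1 : ∀ α ∈ S, ContinuousOn (gh α) (Icc (0:ℝ) 1) := by
    intro α hα
    have : ContinuousOn ((fun q : ℝ × ℝ => gh q.1 q.2) ∘ (fun s => (α, s))) (Icc (0:ℝ) 1) :=
      hcont.comp ((Continuous.prodMk continuous_const continuous_id).continuousOn)
        (fun s hs => ⟨hα, hs⟩)
    exact this
  -- continuity in α for fixed s
  have hcont2 : ∀ s ∈ Icc (0:ℝ) 1, ContinuousOn (fun α => gh α s) S := by
    intro s hs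
    have : ContinuousOn ((fun q : ℝ × ℝ => gh q.1 q.2) ∘ (fun α => (α, s))) S :=
      hcont.comp ((Continuous.prodMk continuous_id continuous_const).continuousOn)
        (fun α hα => ⟨hα, hs⟩)
    exact this
  -- gh α 1 = 1
  have h1 : ∀ α ∈ S, gh α 1 = 1 := by
    intro α hα
    obtain ⟨p, hp0, hpsum, hrep⟩ := hpgf α hα
    rw [hrep 1 (by norm_num)]
    simpa using hpsum.tsum_eq
  -- near 1 the function is below the diagonal
  have hA : ∀ α ∈ S, ∀ c < (1:ℝ), ∃ s, c < s ∧ 0 ≤ s ∧ s < 1 ∧ gh α s < s := by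
    intro α hα c hc
    have hd' := hd α hα
    have hdiff : DifferentiableAt ℝ (gh α) 1 := by
      by_contra h
      rw [deriv_zero_of_not_differentiableAt h] at hd'; linarith
    have hder := hdiff.hasDerivAt
    rw [hasDerivAt_iff_tendsto_slope] at hder
    have hder' : Filter.Tendsto (slope (gh α) 1) (nhdsWithin 1 (Iio 1)) (nhds (deriv (gh α) 1)) :=
      hder.mono_left (nhdsWithin_mono 1 (fun x hx => ne_of_lt hx))
    have hE1 : ∀ᶠ s in nhdsWithin 1 (Iio 1), 1 < slope (gh α) 1 s :=
      hder'.eventually (eventually_gt_nhds hd')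
    have hmax : max c 0 < 1 := max_lt hc one_pos
    have hE2 : Ioo (max c 0) 1 ∈ nhdsWithin (1:ℝ) (Iio 1) :=
      Ioo_mem_nhdsLT_of_mem ⟨hmax, le_refl 1⟩
    obtain ⟨s, hs1, hs2⟩ := (hE1.and (Filter.eventually_of_mem hE2 (fun x hx => hx))).exists
    refine ⟨s, lt_of_le_of_lt (le_max_left c 0) hs2.1, le_of_lt (lt_of_le_of_lt (le_max_right c 0) hs2.1), hs2.2, ?_⟩
    have hslope : 1 < (gh α s - gh α 1) / (s - 1) := by rwa [slope_def_field] at hs1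
    rw [h1 α hα] at hslope
    have hneg : s - 1 < 0 := by linarith [hs2.2]
    have := (lt_div_iff_of_neg hneg).1 hslope
    linarith
  -- convexity of gh α on [0,1]
  have hconv : ∀ α ∈ S, ∀ x ∈ Icc (0:ℝ) 1, ∀ y ∈ Icc (0:ℝ) 1, ∀ a b : ℝ,
      0 ≤ a → 0 ≤ b → a + b = 1 → gh α (a*x + b*y) ≤ a * gh α x + b * gh α y := by
    intro α hα x hx y hy a b ha hb hab
    obtain ⟨p, hp0, hpsum, hrep⟩ := hpgf α hα
    have hmem : a*x+b*y ∈ Icc (0:ℝ) 1 := by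
      constructor
      · exact add_nonneg (mul_nonneg ha hx.1) (mul_nonneg hb hy.1)
      · nlinarith [mul_le_mul_of_nonneg_left hx.2 ha, mul_le_mul_of_nonneg_left hy.2 hb]
    rw [hrep _ hmem, hrep _ hx, hrep _ hy]
    exact stmt12_convex hp0 hpsum.summable hx hy ha hb hab
  -- existence of a fixed point in [0,1)
  have hex : ∀ α ∈ S, ∃ q, q ∈ Ico (0:ℝ) 1 ∧ gh α q = q := by
    intro α hα
    obtain ⟨s, hs0lt, hs0, hs1, hlt⟩ := hA α hα 0 one_pos
    have h0 : 0 ≤ gh α 0 := by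
      obtain ⟨p, hp0, hpsum, hrep⟩ := hpgf α hα
      rw [hrep 0 (by norm_num)]
      exact tsum_nonneg fun i => mul_nonneg (hp0 i) (pow_nonneg le_rfl i)
    have hc : ContinuousOn (fun t => gh α t - t) (Icc 0 s) :=
      ((hcont1 α hα).mono (Icc_subset_Icc le_rfl hs1.le)).sub continuousOn_id
    have hmem : (0:ℝ) ∈ Icc ((fun t => gh α t - t) s) ((fun t => gh α t - t) 0) := by
      constructor
      · show gh α s - s ≤ 0; linarith
      · show (0:ℝ) ≤ gh α 0 - 0; linarith
    obtain ⟨q, hq, hq0⟩ := intermediate_value_Icc' (le_of_lt hs0lt) hc hmem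
    refine ⟨q, ⟨hq.1, lt_of_le_of_lt hq.2 hs1⟩, by simpa using sub_eq_zero.1 hq0⟩
  -- uniqueness of the fixed point in [0,1)
  have hkey : ∀ α ∈ S, ∀ q1 q2 : ℝ, 0 ≤ q1 → q1 < q2 → q2 < 1 →
      gh α q1 = q1 → q2 ≤ gh α q2 → False := by
    intro α hα q1 q2 h0 h12 h21 hf1 hf2
    obtain ⟨s, hcs, hs0, hs1, hlt⟩ := hA α hα q2 h21
    have hsq1 : 0 < s - q1 := by linarith
    set a := (s - q2)/(s - q1) with hadef
    set b := (q2 - q1)/(s - q1) with hbdef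
    have ha : 0 ≤ a := div_nonneg (by linarith) hsq1.le
    have hb : 0 < b := div_pos (by linarith) hsq1
    have hab : a + b = 1 := by rw [hadef, hbdef]; field_simp; ring
    have hxy : a * q1 + b * s = q2 := by rw [hadef, hbdef]; field_simp; ring
    have hle := hconv α hα q1 ⟨h0, by linarith⟩ s ⟨hs0, hs1.le⟩ a b ha hb.le hab
    rw [hxy, hf1] at hle
    have h5 : b * gh α s < b * s := mul_lt_mul_of_pos_left hlt hb
    nlinarith
  have huniq : ∀ α ∈ S, ∀ q1 ∈ Ico (0:ℝ) 1, ∀ q2 ∈ Ico (0:ℝ) 1,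
      gh α q1 = q1 → gh α q2 = q2 → q1 = q2 := by
    intro α hα q1 hq1 q2 hq2 hf1 hf2
    rcases lt_trichotomy q1 q2 with h|h|h
    · exact (hkey α hα q1 q2 hq1.1 h hq2.2 hf1 hf2.ge).elim
    · exact h
    · exact ((hkey α hα q2 q1 hq2.1 h hq1.2 hf2 hf1.ge)).elim
  -- sign structure around the fixed point
  have hsign : ∀ α ∈ S, ∀ q, 0 ≤ q → q < 1 → gh α q = q → ∀ t, 0 ≤ t → t < 1 →
      (t < q → t < gh α t) ∧ (q < t → gh α t < t) := by
    intro α hα q hq0 hq1 hfq t ht0 ht1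
    constructor
    · intro htq
      by_contra hcon
      push_neg at hcon
      obtain ⟨s, hcs, hs0, hs1, hlt⟩ := hA α hα q hq1
      have hst : 0 < s - t := by linarith
      set a := (s - q)/(s - t) with hadef
      set b := (q - t)/(s - t) with hbdef
      have ha : 0 ≤ a := div_nonneg (by linarith) hst.le
      have hb : 0 < b := div_pos (by linarith) hst
      have hab : a + b = 1 := by rw [hadef, hbdef]; field_simp; ring
      have hxy : a * t + b * s = q := by rw [hadef, hbdef]; field_simp; ring
      have hle := hconv α hα t ⟨ht0, ht1.le⟩ s ⟨hs0, hs1.le⟩ a b ha hb.le hab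
      rw [hxy, hfq] at hle
      have h5 : b * gh α s < b * s := mul_lt_mul_of_pos_left hlt hb
      have h6 : a * gh α t ≤ a * t := mul_le_mul_of_nonneg_left hcon ha
      nlinarith
    · intro hqt
      obtain ⟨s, hcs, hs0, hs1, hlt⟩ := hA α hα t ht1
      have hsq : 0 < s - q := by linarith
      set a := (s - t)/(s - q) with hadef
      set b := (t - q)/(s - q) with hbdef
      have ha : 0 ≤ a := div_nonneg (by linarith) hsq.le
      have hb : 0 < b := div_pos (by linarith) hsq
      have hab : a + b = 1 := by rw [hadef, hbdef]; field_simp; ring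
      have hxy : a * q + b * s = t := by rw [hadef, hbdef]; field_simp; ring
      have hle := hconv α hα q ⟨hq0, hq1.le⟩ s ⟨hs0, hs1.le⟩ a b ha hb.le hab
      rw [hxy, hfq] at hle
      have h5 : b * gh α s < b * s := mul_lt_mul_of_pos_left hlt hb
      nlinarith
  -- choose the fixed point
  have hex' : ∀ α : ℝ, ∃ q : ℝ, α ∈ S → (q ∈ Ico (0:ℝ) 1 ∧ gh α q = q) := by
    intro α
    by_cases h : α ∈ S
    · obtain ⟨q, hq⟩ := hex α h; exact ⟨q, fun _ => hq⟩
    · exact ⟨0, fun h' => absurd h' h⟩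
  choose Q hQ using hex'
  -- continuity of Q on S
  have hQcont : ContinuousOn Q S := by
    intro α₀ hα₀
    obtain ⟨⟨hq00, hq01⟩, hq0fix⟩ := hQ α₀ hα₀
    apply Metric.tendsto_nhds.2
    intro ε hε
    set q₀ := Q α₀ with hq₀def
    have hmemS : ∀ᶠ α in nhdsWithin α₀ S, α ∈ S :=
      Filter.eventually_of_mem self_mem_nhdsWithin (fun x hx => hx)
    -- upper bound
    obtain ⟨s₂, hs₂1, hs₂2⟩ := exists_between (lt_min (lt_add_of_pos_right q₀ hε) hq01)
    have hs₂0 : 0 ≤ s₂ := le_of_lt (lt_of_le_of_lt hq00 hs₂1)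
    have hs₂lt1 : s₂ < 1 := lt_of_lt_of_le hs₂2 (min_le_right _ _)
    have hs₂ltε : s₂ < q₀ + ε := lt_of_lt_of_le hs₂2 (min_le_left _ _)
    have h₂ : gh α₀ s₂ < s₂ :=
      (hsign α₀ hα₀ q₀ hq00 hq01 hq0fix s₂ hs₂0 hs₂lt1).2 hs₂1
    have E₂ : ∀ᶠ α in nhdsWithin α₀ S, gh α s₂ < s₂ :=
      ((hcont2 s₂ ⟨hs₂0, hs₂lt1.le⟩ α₀ hα₀).eventually (eventually_lt_nhds h₂))
    have Ehigh : ∀ᶠ α in nhdsWithin α₀ S, Q α < q₀ + ε := by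
      filter_upwards [E₂, hmemS] with α h2 hα
      obtain ⟨⟨hq0', hq1'⟩, hfix'⟩ := hQ α hα
      have himp := (hsign α hα (Q α) hq0' hq1' hfix' s₂ hs₂0 hs₂lt1).1
      have hle : Q α ≤ s₂ := by
        by_contra hcon
        push_neg at hcon
        exact absurd (himp hcon) (not_lt.2 h2.le)
      linarith
    have Elow : ∀ᶠ α in nhdsWithin α₀ S, q₀ - ε < Q α := by
      rcases lt_or_ge q₀ ε with h|h
      · filter_upwards [hmemS] with α hα
        obtain ⟨⟨hq0', _⟩, _⟩ := hQ α hα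
        linarith
      · obtain ⟨s₁, h₁a, h₁b⟩ := exists_between (show q₀ - ε < q₀ by linarith)
        have hs₁0 : 0 ≤ s₁ := le_of_lt (lt_of_le_of_lt (by linarith) h₁a)
        have hs₁lt1 : s₁ < 1 := lt_trans h₁b hq01
        have h₁ : s₁ < gh α₀ s₁ :=
          (hsign α₀ hα₀ q₀ hq00 hq01 hq0fix s₁ hs₁0 hs₁lt1).1 h₁b
        have E₁ : ∀ᶠ α in nhdsWithin α₀ S, s₁ < gh α s₁ :=
          ((hcont2 s₁ ⟨hs₁0, hs₁lt1.le⟩ α₀ hα₀).eventually (eventually_gt_nhds h₁))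
        filter_upwards [E₁, hmemS] with α h1 hα
        obtain ⟨⟨hq0', hq1'⟩, hfix'⟩ := hQ α hα
        have himp := (hsign α hα (Q α) hq0' hq1' hfix' s₁ hs₁0 hs₁lt1).2
        have hge : s₁ ≤ Q α := by
          by_contra hcon
          push_neg at hcon
          exact absurd (himp hcon) (not_lt.2 h1.le)
        linarith
    filter_upwards [Ehigh, Elow] with α h1 h2
    rw [Real.dist_eq, abs_lt]
    exact ⟨by linarith, by linarith⟩
  refine ⟨fun α => 1 - Q α, continuousOn_const.sub hQcont, ?_⟩
  intro α hα
  obtain ⟨⟨hq0, hq1⟩, hqfix⟩ := hQ α hα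
  refine ⟨⟨show (0:ℝ) < 1 - Q α by linarith, show 1 - Q α ≤ 1 by linarith⟩, ?_, ?_⟩
  · show 1 - (1 - Q α) = gh α (1 - (1 - Q α))
    have h : 1 - (1 - Q α) = Q α := by ring
    rw [h]; exact hqfix.symm
  · intro r hr hfr
    show r = 1 - Q α
    have hmem : 1 - r ∈ Ico (0:ℝ) 1 := ⟨by linarith [hr.2], by linarith [hr.1]⟩
    have := huniq α hα (1 - r) hmem (Q α) ⟨hq0, hq1⟩ hfr.symm hqfix
    linarith
end
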